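/- Let V be a vector space over ℝ, M and K positive integers, n : Fin M → ℝ with n i > 0, N = ∑ i, n i, and suppose every client has the uniform class distribution p' i j = 1 / K for all i, j. Let T : ℕ → Fin M → (V → V) be arbitrary per-round local training operators, and fix initial local models w⁰ : Fin M → V. Define the FedAVG recursion by: g^{(r)} = ∑ i, (n i / N) • (v i^{(r)}), where v i^{(0)} = w⁰ i and v i^{(r+1)} = T r i (g^{(r)}); and define the cwFedAVG recursion by: for each class j, G j^{(r)} = ∑ i, (q i j) • (u i^{(r)}) with q i j = ((n i / N) * p' i j) / (∑ i', (n i' / N) * p' i' j), u i^{(0)} = w⁰ i, and u i^{(r+1)} = T r i (∑ j, (p' i j) • (G j^{(r)})). Then for all rounds r, all clients i, and all classes j: u i^{(r)} = v i^{(r)} and G j^{(r)} = g^{(r)}; that is, under uniform class distributions on all clients, the cwFedAVG iteration coincides with the FedAVG iteration at every communication round. -/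
import Mathlib


/-- Under uniform class distributions on all clients, the cwFedAVG iteration coincides
with the FedAVG iteration at every communication round: the local models agree and
every class-specific global model equals the FedAVG global model. -/
theorem cwFedAVG_iteration_eq_fedAVG_iteration_of_uniform
    (V : Type*) [AddCommGroup V] [Module ℝ V]
    (M K : ℕ) (hM : 0 < M) (hK : 0 < K)
    (n : Fin M → ℝ) (hn : ∀ i, 0 < n i)
    (N : ℝ) (hN : N = ∑ i, n i)
    (p' : Fin M → Fin K → ℝ) (hp' : ∀ i j, p' i j = 1 / K)
    (T : ℕ → Fin M → (V → V))
    (w0 : Fin M → V)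
    (q : Fin M → Fin K → ℝ)
    (hq : ∀ i j, q i j = ((n i / N) * p' i j) / (∑ i', (n i' / N) * p' i' j))
    -- FedAVG recursion
    (v : ℕ → Fin M → V) (g : ℕ → V)
    (hg : ∀ r, g r = ∑ i, (n i / N) • (v r i))
    (hv0 : ∀ i, v 0 i = w0 i)
    (hv : ∀ r i, v (r + 1) i = T r i (g r))
    -- cwFedAVG recursion
    (u : ℕ → Fin M → V) (G : ℕ → Fin K → V)
    (hGdef : ∀ r j, G r j = ∑ i, (q i j) • (u r i))
    (hu0 : ∀ i, u 0 i = w0 i)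
    (hu : ∀ r i, u (r + 1) i = T r i (∑ j, (p' i j) • (G r j))) :
    ∀ r, (∀ i, u r i = v r i) ∧ (∀ j, G r j = g r) := by
  have hN0 : 0 < N := by
    rw [hN]
    exact Finset.sum_pos (fun i _ => hn i) (Finset.univ_nonempty_iff.2 ⟨⟨0, hM⟩⟩)
  have hK0 : (K : ℝ) ≠ 0 := Nat.cast_ne_zero.2 hK.ne'
  have hsum1 : (∑ i, n i / N) = 1 := by
    rw [← Finset.sum_div, ← hN, div_self hN0.ne']
  have hqeq : ∀ i j, q i j = n i / N := by
    intro i j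
    rw [hq]
    simp only [hp']
    rw [show (∑ i', n i' / N * (1 / (K:ℝ))) = (∑ i', n i' / N) * (1 / K) by
      rw [Finset.sum_mul], hsum1, one_mul]
    field_simp
  intro r
  induction r with
  | zero =>
    have hui : ∀ i, u 0 i = v 0 i := fun i => by rw [hu0, hv0]
    refine ⟨hui, fun j => ?_⟩
    rw [hGdef, hg]
    exact Finset.sum_congr rfl fun i _ => by rw [hqeq, hui]
  | succ r ih =>
    obtain ⟨ihu, ihG⟩ := ih
    have hui : ∀ i, u (r + 1) i = v (r + 1) i := by
      intro i
      rw [hu, hv]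
      congr 1
      have : (∑ j, p' i j • G r j) = ∑ j : Fin K, (1 / (K:ℝ)) • g r := by
        exact Finset.sum_congr rfl fun j _ => by rw [hp', ihG]
      rw [this, Finset.sum_const, Finset.card_univ, Fintype.card_fin,
        ← Nat.cast_smul_eq_nsmul ℝ, smul_smul, mul_one_div, div_self hK0, one_smul]
    refine ⟨hui, fun j => ?_⟩
    rw [hGdef, hg]
    exact Finset.sum_congr rfl fun i _ => by rw [hqeq, hui]
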